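/- For any nonnegative integer m and positive integer n, applying m times the operator P_q (where (P_q f)(x) = ∫_0^x f(t)/t d_q t is the Jackson integral) to the function 1 - (x;q)_n gives (1-q)^m ∑_{i=1}^n (1 - (x q^{-m};q)_i) · q^i/(1-q^i) · h_{m-1}(q^i/(1-q^i), q^{i+1}/(1-q^{i+1}), ..., q^n/(1-q^n)). -/

import Mathlib

/-!
Write `g_i(x) = 1 - (x;q)_i` and `a_i = q^i/(1-q^i)`. Since `g_i(0) = 0`, the Jackson integral gives
`P_q g(x) = (1-q) ∑_k g(q^k x)`. From `g_{i+1}(x) - g_i(x) = (x;q)_i x q^i` and the telescoping identity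
`(qy;q)_{i+1} - (y;q)_{i+1} = (qy;q)_i y (1-q^{i+1})` one gets `P_q g_i(x) = (1-q) ∑_{l ≤ i} a_l g_l(x/q)`.
So `P_q` maps `∑_i c_i g_i(x/s)` to `(1-q) ∑_l a_l (∑_{i ≥ l} c_i) g_l(x/(sq))`, and the recursion
`h_{m+1}(a_l, …, a_n) = ∑_{i ≥ l} a_i h_m(a_i, …, a_n)` turns `m` iterations into the stated formula.
-/

noncomputable def qPoch (q a : ℝ) (n : ℕ) : ℝ := ∏ j ∈ Finset.range n, (1 - a * q ^ j)

/-- Complete homogeneous symmetric polynomial `h_k` of the entries of a list. -/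
noncomputable def hPoly : List ℝ → ℕ → ℝ
  | _, 0 => 1
  | [], _ + 1 => 0
  | a :: as, k + 1 => a * hPoly (a :: as) k + hPoly as (k + 1)
termination_by l k => (l.length, k)

/-- The list `[f i, f (i+1), …, f n]`. -/
def varList (f : ℕ → ℝ) (i n : ℕ) : List ℝ := (List.range (n + 1 - i)).map fun j => f (i + j)

/-- The Jackson definite integral `∫_0^x f(t) d_q t`. -/
noncomputable def jInt (q x : ℝ) (f : ℝ → ℝ) : ℝ := (1 - q) * ∑' k : ℕ, q ^ k * x * f (q ^ k * x)

/-- The operator `(P_q f)(x) = ∫_0^x f(t)/t d_q t`. -/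
noncomputable def Pq (q : ℝ) (f : ℝ → ℝ) : ℝ → ℝ := fun x => jInt q x fun t => f t / t

open Finset Filter Topology Asymptotics

section qPochhammer

variable (q : ℝ)

lemma qPoch_succ (a : ℝ) (i : ℕ) : qPoch q a (i + 1) = qPoch q a i * (1 - a * q ^ i) :=
  prod_range_succ _ _

lemma qPoch_succ' (a : ℝ) (i : ℕ) : qPoch q a (i + 1) = (1 - a) * qPoch q (q * a) i := by
  rw [qPoch, prod_range_succ', qPoch, pow_zero, mul_one, mul_comm]
  exact congrArg _ (prod_congr rfl fun _ _ => by ring)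

@[simp]
lemma qPoch_zero_left (i : ℕ) : qPoch q 0 i = 1 := by simp [qPoch]

lemma qPoch_mul_left_sub (y : ℝ) (i : ℕ) :
    qPoch q (q * y) (i + 1) - qPoch q y (i + 1) = qPoch q (q * y) i * y * (1 - q ^ (i + 1)) := by
  rw [qPoch_succ, qPoch_succ']
  ring

lemma continuous_qPoch (i : ℕ) : Continuous fun a => qPoch q a i := by
  unfold qPoch
  fun_prop

lemma tendsto_qPoch_nhds_one {α : Type*} {l : Filter α} {u : α → ℝ} (hu : Tendsto u l (𝓝 0))
    (i : ℕ) : Tendsto (fun k => qPoch q (u k) i) l (𝓝 1) := by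
  have h := ((continuous_qPoch q i).tendsto 0).comp hu
  rwa [qPoch_zero_left] at h

end qPochhammer

section Telescoping

variable {q : ℝ} (hq0 : 0 ≤ q) (hq1 : q < 1)
include hq0 hq1

-- `(q^k y; q)_{i+1}` telescopes, with limit `1` as `k → ∞`.
lemma hasSum_qPoch_mul_geometric (y : ℝ) (i : ℕ) :
    HasSum (fun k : ℕ => qPoch q (q ^ (k + 1) * y) i * (q ^ k * y) * (1 - q ^ (i + 1)))
      (1 - qPoch q y (i + 1)) := by
  set F : ℕ → ℝ := fun k => qPoch q (q ^ k * y) (i + 1)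
  have hstep : ∀ k, qPoch q (q ^ (k + 1) * y) i * (q ^ k * y) * (1 - q ^ (i + 1)) =
      F (k + 1) - F k := fun k => by
    simp only [F, show q ^ (k + 1) * y = q * (q ^ k * y) by ring, qPoch_mul_left_sub]
  have hgeom : Tendsto (fun k : ℕ => q ^ k * y) atTop (𝓝 0) := by
    simpa using (tendsto_pow_atTop_nhds_zero_of_lt_one hq0 hq1).mul_const y
  have hsummable : Summable fun k : ℕ =>
      qPoch q (q ^ (k + 1) * y) i * (q ^ k * y) * (1 - q ^ (i + 1)) := by
    refine summable_of_isBigO_nat (summable_geometric_of_lt_one hq0 hq1) ?_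
    have hbdd := (tendsto_qPoch_nhds_one q
      ((tendsto_add_atTop_iff_nat 1).2 hgeom) i).isBigO_one ℝ
    simpa [mul_comm, mul_assoc] using
      ((hbdd.mul (isBigO_const_mul_self y _ atTop)).const_mul_left (1 - q ^ (i + 1)))
  simp only [hstep] at hsummable ⊢
  rw [hsummable.hasSum_iff_tendsto_nat]
  simp only [sum_range_sub]
  simpa [F] using (tendsto_qPoch_nhds_one q hgeom (i + 1)).sub_const (F 0)

lemma hasSum_one_sub_qPoch (y : ℝ) (i : ℕ) :
    HasSum (fun k : ℕ => 1 - qPoch q (q ^ (k + 1) * y) i)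
      (∑ l ∈ Icc 1 i, (1 - qPoch q y l) * (q ^ l / (1 - q ^ l))) := by
  induction i with
  | zero => simp [qPoch]
  | succ i ih =>
    have hne : 1 - q ^ (i + 1) ≠ 0 := (sub_pos.2 (pow_lt_one₀ hq0 hq1 i.succ_ne_zero)).ne'
    rw [sum_Icc_succ_top (Nat.le_add_left 1 i)]
    refine (ih.add ((hasSum_qPoch_mul_geometric hq0 hq1 y i).mul_right
      (q ^ (i + 1) / (1 - q ^ (i + 1))))).congr_fun fun k => ?_
    rw [qPoch_succ]
    field_simp
    ring

end Telescoping

section CompleteHomogeneous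

lemma hPoly_zero (l : List ℝ) : hPoly l 0 = 1 := by
  cases l <;> simp [hPoly]

lemma hPoly_nil_succ (k : ℕ) : hPoly [] (k + 1) = 0 := by
  simp [hPoly]

lemma hPoly_cons_succ (a : ℝ) (as : List ℝ) (k : ℕ) :
    hPoly (a :: as) (k + 1) = a * hPoly (a :: as) k + hPoly as (k + 1) := by
  simp [hPoly]

lemma varList_of_lt (f : ℕ → ℝ) {i n : ℕ} (h : n < i) : varList f i n = [] := by
  simp [varList, Nat.sub_eq_zero_of_le h]

lemma varList_of_le (f : ℕ → ℝ) {i n : ℕ} (h : i ≤ n) :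
    varList f i n = f i :: varList f (i + 1) n := by
  rw [varList, varList, show n + 1 - i = n + 1 - (i + 1) + 1 by omega, List.range_succ_eq_map]
  simp only [List.map_cons, List.map_map, add_zero]
  congr 1
  exact List.map_congr_left fun j _ => by simp [add_assoc, add_comm 1 j]

lemma sum_Icc_mul_hPoly_varList (f : ℕ → ℝ) (m i n : ℕ) :
    ∑ j ∈ Icc i n, f j * hPoly (varList f j n) m = hPoly (varList f i n) (m + 1) := by
  induction hd : n + 1 - i generalizing i with
  | zero =>
    rw [Icc_eq_empty (by omega), varList_of_lt f (by omega), sum_empty, hPoly_nil_succ]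
  | succ d ih =>
    have hi : i ≤ n := by omega
    rw [← insert_Icc_add_one_left_eq_Icc hi, sum_insert (by simp), ih (i + 1) (by omega),
      varList_of_le f hi, hPoly_cons_succ]

end CompleteHomogeneous

section JacksonOperator

lemma Pq_apply_of_map_zero {q : ℝ} (hq : q ≠ 0) {f : ℝ → ℝ} (hf : f 0 = 0) (x : ℝ) :
    Pq q f x = (1 - q) * ∑' k : ℕ, f (q ^ k * x) := by
  refine congrArg _ (tsum_congr fun k => ?_)
  rcases eq_or_ne x 0 with rfl | hx
  · simp [hf]
  · have : q ^ k * x ≠ 0 := mul_ne_zero (pow_ne_zero k hq) hx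
    field_simp

lemma Pq_const_mul (q c : ℝ) (f : ℝ → ℝ) (x : ℝ) :
    Pq q (fun t => c * f t) x = c * Pq q f x := by
  simp only [Pq, jInt, mul_div_assoc, mul_left_comm _ c, tsum_mul_left]

variable {q : ℝ} (hq0 : 0 < q) (hq1 : q < 1)
include hq0 hq1

lemma Pq_sum_one_sub_qPoch (s : ℝ) (c : ℕ → ℝ) (n : ℕ) (x : ℝ) :
    Pq q (fun t => ∑ i ∈ Icc 1 n, (1 - qPoch q (t / s) i) * c i) x =
      (1 - q) * ∑ l ∈ Icc 1 n,
        (1 - qPoch q (x / (s * q)) l) * (q ^ l / (1 - q ^ l)) * ∑ i ∈ Icc l n, c i := by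
  rw [Pq_apply_of_map_zero hq0.ne' (by simp) x]
  have hsum := hasSum_sum fun i (_ : i ∈ Icc 1 n) =>
    (hasSum_one_sub_qPoch hq0.le hq1 (x / (s * q)) i).mul_right (c i)
  have harg : ∀ k : ℕ, q ^ k * x / s = q ^ (k + 1) * (x / (s * q)) := fun k => by
    field_simp
    ring
  simp only [harg, hsum.tsum_eq]
  congr 1
  simp only [sum_mul, mul_sum]
  exact sum_comm' fun i l => by simp only [mem_Icc]; omega

lemma Pq_iterate_succ_one_sub_qPoch (n m : ℕ) (x : ℝ) :
    (Pq q)^[m + 1] (fun t => 1 - qPoch q t n) x =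
      (1 - q) ^ (m + 1) * ∑ i ∈ Icc 1 n,
        (1 - qPoch q (x / q ^ (m + 1)) i) * (q ^ i / (1 - q ^ i)) *
          hPoly (varList (fun j => q ^ j / (1 - q ^ j)) i n) m := by
  induction m generalizing x with
  | zero =>
    have harg : ∀ k : ℕ, q ^ k * x = q ^ (k + 1) * (x / q) := fun k => by
      field_simp
      ring
    rw [Function.iterate_one, Pq_apply_of_map_zero hq0.ne' (by simp) x]
    simp only [harg, (hasSum_one_sub_qPoch hq0.le hq1 (x / q) n).tsum_eq, zero_add, pow_one,
      hPoly_zero, mul_one]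
  | succ m ih =>
    rw [Function.iterate_succ_apply', funext ih, Pq_const_mul]
    simp only [mul_assoc (1 - qPoch q _ _)]
    rw [Pq_sum_one_sub_qPoch hq0 hq1]
    simp only [sum_Icc_mul_hPoly_varList, ← pow_succ, mul_assoc]
    ring

end JacksonOperator

theorem Pq_iterate_poch_general (q : ℝ) (hq0 : 0 < q) (hq1 : q < 1) (m n : ℕ) (x : ℝ) :
    (Pq q)^[m] (fun t => 1 - qPoch q t n) x =
      if m = 0 then 1 - qPoch q x n
      else (1 - q) ^ m * ∑ i ∈ Finset.Icc 1 n,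
        (1 - qPoch q (x * q ^ (-(m : ℤ))) i) * (q ^ i / (1 - q ^ i)) *
          hPoly (varList (fun j => q ^ j / (1 - q ^ j)) i n) (m - 1) := by
  cases m with
  | zero => simp
  | succ m =>
    rw [if_neg m.succ_ne_zero, Nat.add_sub_cancel, zpow_neg, zpow_natCast, ← div_eq_mul_inv]
    exact Pq_iterate_succ_one_sub_qPoch hq0 hq1 n m x

/-- `(P_q)^m (1-(x;q)_n)`, with the convention that for `m = 0` the right-hand side is
`1 - (x;q)_n` itself. -/
theorem Pq_iterate_poch (q : ℝ) (hq0 : 0 < q) (hq1 : q < 1) (m n : ℕ) (hn : 0 < n) (x : ℝ) :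
    (Pq q)^[m] (fun t => 1 - qPoch q t n) x =
      if m = 0 then 1 - qPoch q x n
      else (1 - q) ^ m * ∑ i ∈ Finset.Icc 1 n,
        (1 - qPoch q (x * q ^ (-(m : ℤ))) i) * (q ^ i / (1 - q ^ i)) *
          hPoly (varList (fun j => q ^ j / (1 - q ^ j)) i n) (m - 1) :=
  Pq_iterate_poch_general q hq0 hq1 m n x
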